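/- arXiv:1903.09225 — 2 statements merged into one kernel-verified Lean document; each statement's English description precedes it below -/
import Mathlib

section
/- If an m × n integer matrix P has trivial cokernel (the rows generate ℤ^n), then m ≥ n and there exists a reordering and sign change of the rows and a sequence of additions of one row to another after which the first n rows form the identity matrix and the remaining rows are zero. -/
/-! Induct on the number of columns. The rows span `ℤⁿ`, so the entries of the first column
generate `ℤ`; running the Euclidean algorithm on that column by row moves leaves `1` on top and
zeros below. Row moves preserve the row span, so the lower right block again has rows spanning
`ℤⁿ⁻¹`, and it is reduced by induction: since the first column is zero below the top, moves of
the block are moves of the whole matrix. The identity rows obtained this way then clear the rest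
of the first row. -/

/-- A row move: permuting rows, negating a row, or adding one row to another. -/
def RowMove {m n : ℕ} (P Q : Matrix (Fin m) (Fin n) ℤ) : Prop :=
  (∃ σ : Equiv.Perm (Fin m), Q = P.submatrix σ id) ∨
  (∃ i : Fin m, Q = Matrix.updateRow P i (-(P i))) ∨
  (∃ i j : Fin m, i ≠ j ∧ Q = Matrix.updateRow P i (P i + P j))

open Matrix

abbrev RowMoves {m n : ℕ} : Matrix (Fin m) (Fin n) ℤ → Matrix (Fin m) (Fin n) ℤ → Prop :=
  Relation.ReflTransGen RowMove

def rowSpan {m n : ℕ} (P : Matrix (Fin m) (Fin n) ℤ) : Submodule ℤ (Fin n → ℤ) :=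
  Submodule.span ℤ (Set.range fun i => P i)

def identityOnTop (m n : ℕ) : Matrix (Fin m) (Fin n) ℤ :=
  fun i j => if (i : ℕ) = (j : ℕ) then 1 else 0

def border {m n : ℕ} (r : Fin (n + 1) → ℤ) (B : Matrix (Fin m) (Fin n) ℤ) :
    Matrix (Fin (m + 1)) (Fin (n + 1)) ℤ :=
  Matrix.of (vecCons r fun i => vecCons 0 (B i))

section RowReduction

variable {m n : ℕ}

namespace RowMoves

lemma submatrix (P : Matrix (Fin m) (Fin n) ℤ) (σ : Equiv.Perm (Fin m)) :
    RowMoves P (P.submatrix σ id) :=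
  .single (Or.inl ⟨σ, rfl⟩)

lemma updateRow_neg (P : Matrix (Fin m) (Fin n) ℤ) (i : Fin m) :
    RowMoves P (P.updateRow i (-P i)) :=
  .single (Or.inr (Or.inl ⟨i, rfl⟩))

lemma updateRow_add (P : Matrix (Fin m) (Fin n) ℤ) {i j : Fin m} (hij : i ≠ j) :
    RowMoves P (P.updateRow i (P i + P j)) :=
  .single (Or.inr (Or.inr ⟨i, j, hij, rfl⟩))

lemma updateRow_add_nsmul (P : Matrix (Fin m) (Fin n) ℤ) {i j : Fin m} (hij : i ≠ j) (k : ℕ) :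
    RowMoves P (P.updateRow i (P i + k • P j)) := by
  induction k with
  | zero => simpa using .refl
  | succ k ih =>
    refine ih.trans ?_
    convert updateRow_add (P.updateRow i (P i + k • P j)) hij using 1
    rw [updateRow_idem, updateRow_self, updateRow_ne hij.symm, succ_nsmul, add_assoc]

lemma updateRow_add_smul (P : Matrix (Fin m) (Fin n) ℤ) {i j : Fin m} (hij : i ≠ j) (c : ℤ) :
    RowMoves P (P.updateRow i (P i + c • P j)) := by
  obtain ⟨k, rfl | rfl⟩ := Int.eq_nat_or_neg c
  · simpa using updateRow_add_nsmul P hij k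
  -- negate row `i`, add `k` copies of row `j`, negate row `i` back
  have h := ((updateRow_neg P i).trans (updateRow_add_nsmul _ hij k)).trans (updateRow_neg _ i)
  simp only [updateRow_idem, updateRow_self, updateRow_ne hij.symm] at h
  convert h using 2
  rw [neg_add, neg_neg, neg_smul, natCast_zsmul]

lemma updateRow_add_sum {ι : Type*} (P : Matrix (Fin m) (Fin n) ℤ) (i : Fin m) (s : Finset ι)
    (f : ι → Fin m) (hf : ∀ j ∈ s, f j ≠ i) (c : ι → ℤ) :
    RowMoves P (P.updateRow i (P i + ∑ j ∈ s, c j • P (f j))) := by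
  classical
  induction s using Finset.induction_on with
  | empty => simpa using .refl
  | insert a s ha ih =>
    refine (ih fun j hj => hf j (Finset.mem_insert_of_mem hj)).trans ?_
    have hfa : f a ≠ i := hf a (Finset.mem_insert_self a s)
    convert updateRow_add_smul (P.updateRow i (P i + ∑ j ∈ s, c j • P (f j))) hfa.symm (c a)
      using 1
    rw [updateRow_idem, updateRow_self, updateRow_ne hfa, Finset.sum_insert ha]
    abel_nf

end RowMoves

lemma row_mem_rowSpan (P : Matrix (Fin m) (Fin n) ℤ) (i : Fin m) : P i ∈ rowSpan P :=
  Submodule.subset_span ⟨i, rfl⟩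

lemma RowMove.rowSpan_le {P Q : Matrix (Fin m) (Fin n) ℤ} (h : RowMove P Q) :
    rowSpan P ≤ rowSpan Q := by
  refine Submodule.span_le.2 ?_
  rintro _ ⟨k, rfl⟩
  change P k ∈ rowSpan Q
  rcases h with ⟨σ, rfl⟩ | ⟨i, rfl⟩ | ⟨i, j, hij, rfl⟩
  · have hk : P.submatrix σ id (σ.symm k) = P k := by ext; simp
    exact hk ▸ row_mem_rowSpan _ (σ.symm k)
  · obtain rfl | hk := eq_or_ne k i
    · simpa using neg_mem (row_mem_rowSpan (P.updateRow k (-P k)) k)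
    · simpa [updateRow_ne hk] using row_mem_rowSpan (P.updateRow i (-P i)) k
  · obtain rfl | hk := eq_or_ne k i
    · simpa [updateRow_ne hij.symm] using
        sub_mem (row_mem_rowSpan (P.updateRow k (P k + P j)) k)
          (row_mem_rowSpan (P.updateRow k (P k + P j)) j)
    · simpa [updateRow_ne hk] using row_mem_rowSpan (P.updateRow i (P i + P j)) k

lemma RowMoves.rowSpan_le {P Q : Matrix (Fin m) (Fin n) ℤ} (h : RowMoves P Q) :
    rowSpan P ≤ rowSpan Q := by
  induction h with
  | refl => exact le_rfl
  | tail _ hQR ih => exact ih.trans hQR.rowSpan_le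

lemma RowMoves.rowSpan_eq_top {P Q : Matrix (Fin m) (Fin n) ℤ} (h : RowMoves P Q)
    (hP : rowSpan P = ⊤) : rowSpan Q = ⊤ :=
  top_unique (hP ▸ h.rowSpan_le)

lemma exists_sum_mul_eq_one_of_rowSpan_eq_top {P : Matrix (Fin m) (Fin n) ℤ}
    (hP : rowSpan P = ⊤) (k : Fin n) : ∃ c : Fin m → ℤ, ∑ i, c i * P i k = 1 := by
  obtain ⟨c, hc⟩ := (Submodule.mem_span_range_iff_exists_fun ℤ).1
    (hP ▸ Submodule.mem_top : Pi.single k 1 ∈ rowSpan P)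
  exact ⟨c, by simpa [Finset.sum_apply] using congrFun hc k⟩

lemma RowMoves.exists_pivot_of_isUnit (P : Matrix (Fin (m + 1)) (Fin n) ℤ) (k : Fin n)
    {i₀ : Fin (m + 1)} (hunit : IsUnit (P i₀ k)) (hzero : ∀ i ≠ i₀, P i k = 0) :
    ∃ Q, RowMoves P Q ∧ Q 0 k = 1 ∧ ∀ i ≠ 0, Q i k = 0 := by
  obtain ⟨P', hPP', hP'one, hP'zero⟩ :
      ∃ P', RowMoves P P' ∧ P' i₀ k = 1 ∧ ∀ i ≠ i₀, P' i k = 0 := by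
    rcases Int.isUnit_iff.1 hunit with h | h
    · exact ⟨P, .refl, h, hzero⟩
    · refine ⟨_, updateRow_neg P i₀, by simp [h], fun i hi => ?_⟩
      rw [updateRow_ne hi, hzero i hi]
  refine ⟨P'.submatrix (Equiv.swap 0 i₀) id, hPP'.trans (submatrix P' _), by simpa using hP'one,
    fun i hi => hP'zero _ ?_⟩
  rwa [Ne, Equiv.swap_apply_eq_iff, Equiv.swap_apply_right]

lemma RowMoves.exists_pivot (P : Matrix (Fin (m + 1)) (Fin n) ℤ) (hP : rowSpan P = ⊤)
    (k : Fin n) : ∃ Q, RowMoves P Q ∧ Q 0 k = 1 ∧ ∀ i ≠ 0, Q i k = 0 := by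
  induction hN : ∑ i, (P i k).natAbs using Nat.strong_induction_on generalizing P with
  | _ N ih =>
  obtain ⟨c, hc⟩ := exists_sum_mul_eq_one_of_rowSpan_eq_top hP k
  have hne : ∃ i, P i k ≠ 0 := by
    by_contra! h
    simp [h] at hc
  by_cases htwo : ∃ i j, i ≠ j ∧ P i k ≠ 0 ∧ P j k ≠ 0
  · -- Euclid: reduce another nonzero entry modulo a nonzero entry `P j k` of least absolute value
    obtain ⟨j, hj, hjmin⟩ := Finset.exists_min_image
      (Finset.univ.filter fun i => P i k ≠ 0) (fun i => (P i k).natAbs)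
      (by simpa [Finset.filter_nonempty_iff] using hne)
    obtain ⟨i, hij, hi⟩ : ∃ i, i ≠ j ∧ P i k ≠ 0 := by
      obtain ⟨a, b, hab, ha, hb⟩ := htwo
      by_cases haj : a = j
      · exact ⟨b, fun h => hab (haj.trans h.symm), hb⟩
      · exact ⟨a, haj, ha⟩
    simp only [Finset.mem_filter, Finset.mem_univ, true_and] at hj hjmin
    set P' := P.updateRow i (P i + (-(P i k / P j k)) • P j)
    have hmove : RowMoves P P' := updateRow_add_smul P hij _
    have hP'i : (P' i k).natAbs < (P i k).natAbs := by
      have hmod : P' i k = P i k % P j k := by simp [P', Int.emod_def]; ring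
      have hmod_nonneg := Int.emod_nonneg (P i k) hj
      have hmod_lt := Int.emod_lt (P i k) hj
      have hji := hjmin i hi
      omega
    have hlt : ∑ l, (P' l k).natAbs < N := by
      rw [← hN]
      refine Finset.sum_lt_sum (fun l _ => ?_) ⟨i, Finset.mem_univ i, hP'i⟩
      obtain rfl | hl := eq_or_ne l i
      · exact hP'i.le
      · simp [P', updateRow_ne hl]
    obtain ⟨Q, hPQ', hQ0, hQ⟩ := ih _ hlt P' (hmove.rowSpan_eq_top hP) rfl
    exact ⟨Q, hmove.trans hPQ', hQ0, hQ⟩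
  · push Not at htwo
    obtain ⟨i₀, hi₀⟩ := hne
    have hzero : ∀ i ≠ i₀, P i k = 0 := fun i hi =>
      by_contra fun h => hi₀ (htwo i i₀ hi h)
    rw [Finset.sum_eq_single i₀ (fun i _ hi => by rw [hzero i hi, mul_zero]) (by simp)] at hc
    exact exists_pivot_of_isUnit P k (IsUnit.of_mul_eq_one_right _ hc) hzero

@[simp] lemma border_zero (r : Fin (n + 1) → ℤ) (B : Matrix (Fin m) (Fin n) ℤ) :
    border r B 0 = r := rfl

@[simp] lemma border_succ (r : Fin (n + 1) → ℤ) (B : Matrix (Fin m) (Fin n) ℤ) (i : Fin m) :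
    border r B i.succ = vecCons 0 (B i) := rfl

lemma border_updateRow_succ (r : Fin (n + 1) → ℤ) (B : Matrix (Fin m) (Fin n) ℤ) (i : Fin m)
    (x : Fin n → ℤ) :
    border r (B.updateRow i x) = (border r B).updateRow i.succ (vecCons 0 x) := by
  ext a b
  refine Fin.cases ?_ (fun a => ?_) a
  · simp [updateRow_ne (Fin.succ_ne_zero i).symm]
  · obtain rfl | ha := eq_or_ne a i
    · simp
    · simp [updateRow_ne ha, updateRow_ne (Fin.succ_injective _ |>.ne ha)]

lemma border_updateRow_zero (r x : Fin (n + 1) → ℤ) (B : Matrix (Fin m) (Fin n) ℤ) :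
    (border r B).updateRow 0 x = border x B := by
  ext a b
  refine Fin.cases ?_ (fun a => ?_) a <;> simp

lemma border_submatrix (r : Fin (n + 1) → ℤ) (B : Matrix (Fin m) (Fin n) ℤ)
    (σ : Equiv.Perm (Fin m)) :
    border r (B.submatrix σ id) =
      (border r B).submatrix (Equiv.Perm.decomposeFin.symm (0, σ)) id := by
  ext a b
  refine Fin.cases ?_ (fun a => ?_) a
  · simp
  · simp [Equiv.Perm.decomposeFin_symm_apply_succ]
    rfl

lemma eq_border_of_col_zero (Q : Matrix (Fin (m + 1)) (Fin (n + 1)) ℤ)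
    (hQ : ∀ i ≠ 0, Q i 0 = 0) : Q = border (Q 0) (Q.submatrix Fin.succ Fin.succ) := by
  ext a b
  refine Fin.cases ?_ (fun a => ?_) a
  · rfl
  · refine Fin.cases ?_ (fun b => ?_) b
    · simpa using hQ _ (Fin.succ_ne_zero a)
    · simp

lemma RowMove.map_border (r : Fin (n + 1) → ℤ) {B C : Matrix (Fin m) (Fin n) ℤ}
    (h : RowMove B C) :
    RowMove (border r B) (border r C) := by
  rcases h with ⟨σ, rfl⟩ | ⟨i, rfl⟩ | ⟨i, j, hij, rfl⟩
  · exact Or.inl ⟨_, border_submatrix r B σ⟩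
  · refine Or.inr (Or.inl ⟨i.succ, ?_⟩)
    rw [border_updateRow_succ, border_succ, neg_cons, neg_zero]
  · refine Or.inr (Or.inr ⟨i.succ, j.succ, (Fin.succ_injective _).ne hij, ?_⟩)
    rw [border_updateRow_succ, border_succ, border_succ, cons_add_cons, add_zero]

lemma RowMoves.map_border (r : Fin (n + 1) → ℤ) {B C : Matrix (Fin m) (Fin n) ℤ}
    (h : RowMoves B C) :
    RowMoves (border r B) (border r C) :=
  Relation.ReflTransGen.lift (border r) (fun _ _ => RowMove.map_border r) B C h

lemma rowSpan_submatrix_succ_eq_top {Q : Matrix (Fin (m + 1)) (Fin (n + 1)) ℤ}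
    (hQ : rowSpan Q = ⊤) (h00 : Q 0 0 ≠ 0) (hcol : ∀ i ≠ 0, Q i 0 = 0) :
    rowSpan (Q.submatrix Fin.succ Fin.succ) = ⊤ := by
  refine eq_top_iff.2 fun w _ => ?_
  obtain ⟨c, hc⟩ := (Submodule.mem_span_range_iff_exists_fun ℤ).1
    (hQ ▸ Submodule.mem_top : (vecCons 0 w : Fin (n + 1) → ℤ) ∈ rowSpan Q)
  -- the first coordinate of `vecCons 0 w = ∑ c i • Q i` forces `c 0 = 0`
  have hc0 : c 0 = 0 := by
    have h := congrFun hc 0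
    simp only [Finset.sum_apply, Pi.smul_apply, smul_eq_mul, Fin.sum_univ_succ,
      hcol _ (Fin.succ_ne_zero _), mul_zero, Finset.sum_const_zero, add_zero] at h
    simpa [h00] using h
  refine (Submodule.mem_span_range_iff_exists_fun ℤ).2 ⟨fun i => c i.succ, funext fun b => ?_⟩
  have h := congrFun hc b.succ
  simp only [Finset.sum_apply, Pi.smul_apply, smul_eq_mul, Fin.sum_univ_succ, hc0,
    zero_mul, zero_add, cons_val_succ] at h
  simpa [Finset.sum_apply] using h

lemma identityOnTop_succ (m n : ℕ) :
    identityOnTop (m + 1) (n + 1) = border (Pi.single 0 1) (identityOnTop m n) := by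
  ext a b
  refine Fin.cases ?_ (fun a => ?_) a <;> refine Fin.cases ?_ (fun b => ?_) b <;>
    simp [identityOnTop, Fin.ext_iff]

lemma identityOnTop_castLE (h : n ≤ m) (j : Fin n) :
    identityOnTop m n (Fin.castLE h j) = Pi.single j 1 := by
  ext b
  simp [identityOnTop, Pi.single_apply, Fin.ext_iff, eq_comm]

lemma RowMoves.border_identityOnTop (hnm : n ≤ m) {v : Fin (n + 1) → ℤ} (hv : v 0 = 1) :
    RowMoves (border v (identityOnTop m n)) (identityOnTop (m + 1) (n + 1)) := by
  -- row `(castLE j).succ` is `e_{j.succ}`; subtracting `v j.succ` times it for every `j`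
  -- turns the first row into `e₀`
  convert updateRow_add_sum (border v (identityOnTop m n)) 0 Finset.univ
    (fun j => (Fin.castLE hnm j).succ) (fun j _ => Fin.succ_ne_zero _) (fun j => -v j.succ) using 1
  rw [border_updateRow_zero, identityOnTop_succ]
  congr 1
  ext b
  refine Fin.cases ?_ (fun b => ?_) b
  · simp [hv, Finset.sum_apply, identityOnTop_castLE]
  · simp [Finset.sum_apply, identityOnTop_castLE, Pi.single_apply]

theorem le_and_rowMoves_identityOnTop_of_rowSpan_eq_top :
    ∀ {m n : ℕ} (P : Matrix (Fin m) (Fin n) ℤ), rowSpan P = ⊤ →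
      n ≤ m ∧ RowMoves P (identityOnTop m n)
  | m, 0, P, _ => ⟨m.zero_le, Subsingleton.elim P (identityOnTop m 0) ▸ .refl⟩
  | 0, n + 1, P, hP => by
    obtain ⟨c, hc⟩ := exists_sum_mul_eq_one_of_rowSpan_eq_top hP 0
    simp at hc
  | m + 1, n + 1, P, hP => by
    obtain ⟨Q, hPQ, hQ0, hQ⟩ := RowMoves.exists_pivot P hP 0
    obtain ⟨hnm, hB⟩ := le_and_rowMoves_identityOnTop_of_rowSpan_eq_top
      (Q.submatrix Fin.succ Fin.succ)
      (rowSpan_submatrix_succ_eq_top (hPQ.rowSpan_eq_top hP) (by simp [hQ0]) hQ)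
    refine ⟨Nat.succ_le_succ hnm, hPQ.trans ?_⟩
    rw [eq_border_of_col_zero Q hQ]
    exact (hB.map_border (Q 0)).trans (RowMoves.border_identityOnTop hnm hQ0)

end RowReduction

/-- If the rows of the `m × n` integer matrix `P` generate `ℤⁿ`, then `m ≥ n` and
by reordering/negating rows and adding rows to one another `P` can be transformed into
the matrix whose first `n` rows form the identity and whose remaining rows are zero. -/
theorem stmt_3 {m n : ℕ} (P : Matrix (Fin m) (Fin n) ℤ)
    (hP : Submodule.span ℤ (Set.range fun i : Fin m => P i) = ⊤) :
    n ≤ m ∧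
    Relation.ReflTransGen RowMove P
      (fun i j => if (i : ℕ) = (j : ℕ) then 1 else 0) :=
  le_and_rowMoves_identityOnTop_of_rowSpan_eq_top P hP
end

section
/- Let A be a free abelian group of rank n with basis a_1, …, a_n, and let b_1, …, b_m ∈ A be elements such that A / ⟨b_1,…,b_m⟩ = 0. Then there exist elements b_1', …, b_m' obtained from b_1,…,b_m by a sequence of swaps, negations, and operations b_i ↦ b_i ± b_j (i ≠ j), such that b_i' = a_i for i ≤ n and b_i' = 0 for i > n. -/
/-- A handle-slide move on a tuple of elements of an abelian group: swapping two
entries, negating an entry, or replacing `bᵢ` by `bᵢ ± bⱼ` for `i ≠ j`. -/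
def TupleMove {m : ℕ} {A : Type*} [AddCommGroup A] (b b' : Fin m → A) : Prop :=
  (∃ i j : Fin m, b' = b ∘ Equiv.swap i j) ∨
  (∃ i : Fin m, b' = Function.update b i (-(b i))) ∨
  (∃ i j : Fin m, i ≠ j ∧
    (b' = Function.update b i (b i + b j) ∨ b' = Function.update b i (b i - b j)))

/-!
The moves are invertible, preserve the subgroup generated by the tuple, and commute with additive
maps. In coordinates `A ≅ ℤⁿ`, the first coordinates of the tuple generate `ℤ`, so the Euclidean
algorithm (repeatedly shrinking the larger of two nonzero entries) turns them into `(1, 0, …, 0)`;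
performing the same moves on the tuple leaves one entry with first coordinate `1` and the others in
the kernel `ℤⁿ⁻¹`, which they generate. By induction on `n` those are brought to
`(e₂, …, eₙ, 0, …, 0)`, and subtracting a combination of them turns the remaining entry into `e₁`.
-/

open Function Set Relation

section

variable {A B : Type*} [AddCommGroup A] [AddCommGroup B] {m : ℕ}

theorem closure_range_comp_eq_top {ι : Type*} {f : A →+ B} (hf : Surjective f) {b : ι → A}
    (hb : AddSubgroup.closure (range b) = ⊤) : AddSubgroup.closure (range (f ∘ b)) = ⊤ := by
  rw [range_comp, ← AddMonoidHom.map_closure, hb, AddSubgroup.map_top_of_surjective f hf]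

theorem closure_eq_ker_of_closure_insert_eq_top {φ : A →+ ℤ} {x : A} {D : Set A} (hx : φ x = 1)
    (hD : ∀ d ∈ D, φ d = 0) (htop : AddSubgroup.closure (insert x D) = ⊤) :
    AddSubgroup.closure D = φ.ker := by
  refine le_antisymm ((AddSubgroup.closure_le _).2 hD) fun y hy => ?_
  -- `y ↦ y - φ y • x` retracts the closure of `insert x D` onto the closure of `D`
  have key : ∀ y ∈ AddSubgroup.closure (insert x D), y - φ y • x ∈ AddSubgroup.closure D := by
    intro y hy
    induction hy using AddSubgroup.closure_induction with
    | mem z hz =>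
      obtain rfl | hz := hz
      · simp [hx]
      · simpa [hD z hz] using AddSubgroup.subset_closure hz
    | zero => simp
    | add y z _ _ hy hz =>
      convert add_mem hy hz using 1
      simp only [map_add, add_smul]; abel
    | neg y _ hy =>
      convert neg_mem hy using 1
      simp only [map_neg, neg_smul]; abel
  simpa [(φ.mem_ker).1 hy] using key y (htop ▸ AddSubgroup.mem_top y)

namespace TupleMove

theorem swap (b : Fin m → A) (i j : Fin m) : TupleMove b (b ∘ Equiv.swap i j) :=
  Or.inl ⟨i, j, rfl⟩

theorem neg (b : Fin m → A) (i : Fin m) : TupleMove b (update b i (-b i)) :=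
  Or.inr (Or.inl ⟨i, rfl⟩)

theorem add (b : Fin m → A) {i j : Fin m} (hij : i ≠ j) : TupleMove b (update b i (b i + b j)) :=
  Or.inr (Or.inr ⟨i, j, hij, Or.inl rfl⟩)

theorem sub (b : Fin m → A) {i j : Fin m} (hij : i ≠ j) : TupleMove b (update b i (b i - b j)) :=
  Or.inr (Or.inr ⟨i, j, hij, Or.inr rfl⟩)

theorem symm {b b' : Fin m → A} (h : TupleMove b b') : TupleMove b' b := by
  obtain ⟨i, j, rfl⟩ | ⟨i, rfl⟩ | ⟨i, j, hij, rfl | rfl⟩ := h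
  · convert swap (b ∘ Equiv.swap i j) i j using 1
    ext; simp
  · simpa using neg (update b i (-b i)) i
  · simpa [update_of_ne hij.symm] using sub (update b i (b i + b j)) hij
  · simpa [update_of_ne hij.symm] using add (update b i (b i - b j)) hij

theorem mem_closure_range {b b' : Fin m → A} (h : TupleMove b b') (r : Fin m) :
    b' r ∈ AddSubgroup.closure (range b) := by
  have hb k : b k ∈ AddSubgroup.closure (range b) := AddSubgroup.subset_closure ⟨k, rfl⟩
  obtain ⟨i, j, rfl⟩ | ⟨i, rfl⟩ | ⟨i, j, -, rfl | rfl⟩ := h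
  · exact hb _
  all_goals
    rw [update_apply]
    split_ifs
  · exact neg_mem (hb i)
  · exact hb r
  · exact add_mem (hb i) (hb j)
  · exact hb r
  · exact sub_mem (hb i) (hb j)
  · exact hb r

theorem closure_range_eq {b b' : Fin m → A} (h : TupleMove b b') :
    AddSubgroup.closure (range b') = AddSubgroup.closure (range b) :=
  le_antisymm (AddSubgroup.closure_le _ |>.2 <| range_subset_iff.2 h.mem_closure_range)
    (AddSubgroup.closure_le _ |>.2 <| range_subset_iff.2 h.symm.mem_closure_range)

theorem map (f : A →+ B) {b b' : Fin m → A} (h : TupleMove b b') :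
    TupleMove (f ∘ b) (f ∘ b') := by
  obtain ⟨i, j, rfl⟩ | ⟨i, rfl⟩ | ⟨i, j, hij, rfl | rfl⟩ := h
  · exact swap _ i j
  · simpa [comp_update] using neg (f ∘ b) i
  · simpa [comp_update] using add (f ∘ b) hij
  · simpa [comp_update] using sub (f ∘ b) hij

theorem exists_of_map (f : A →+ B) {b : Fin m → A} {c : Fin m → B} (h : TupleMove (f ∘ b) c) :
    ∃ b', TupleMove b b' ∧ f ∘ b' = c := by
  obtain ⟨i, j, rfl⟩ | ⟨i, rfl⟩ | ⟨i, j, hij, rfl | rfl⟩ := h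
  · exact ⟨_, swap b i j, rfl⟩
  · exact ⟨_, neg b i, by simp [comp_update]⟩
  · exact ⟨_, add b hij, by simp [comp_update]⟩
  · exact ⟨_, sub b hij, by simp [comp_update]⟩

theorem cons (x : A) {d d' : Fin m → A} (h : TupleMove d d') :
    TupleMove (Fin.cons x d : Fin (m + 1) → A) (Fin.cons x d') := by
  obtain ⟨i, j, rfl⟩ | ⟨i, rfl⟩ | ⟨i, j, hij, rfl | rfl⟩ := h
  · convert swap (Fin.cons x d : Fin (m + 1) → A) i.succ j.succ using 1
    ext r
    cases r using Fin.cases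
    · simp [Equiv.swap_apply_of_ne_of_ne (Fin.succ_ne_zero i).symm (Fin.succ_ne_zero j).symm]
    · simp [Equiv.swap_apply_def, apply_ite d, apply_ite (Fin.cons x d)]
  · simpa [Fin.cons_update] using neg (Fin.cons x d : Fin (m + 1) → A) i.succ
  · simpa [Fin.cons_update] using add (Fin.cons x d : Fin (m + 1) → A) (Fin.succ_inj.not.2 hij)
  · simpa [Fin.cons_update] using sub (Fin.cons x d : Fin (m + 1) → A) (Fin.succ_inj.not.2 hij)

theorem closure_range_eq_of_reflTransGen {b b' : Fin m → A} (h : ReflTransGen TupleMove b b') :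
    AddSubgroup.closure (range b') = AddSubgroup.closure (range b) := by
  induction h with
  | refl => rfl
  | tail _ hmove ih => rw [hmove.closure_range_eq, ih]

theorem reflTransGen_map (f : A →+ B) {b b' : Fin m → A} (h : ReflTransGen TupleMove b b') :
    ReflTransGen TupleMove (f ∘ b) (f ∘ b') :=
  ReflTransGen.lift (f ∘ ·) (fun _ _ => map f) _ _ h

theorem reflTransGen_cons (x : A) {d d' : Fin m → A} (h : ReflTransGen TupleMove d d') :
    ReflTransGen TupleMove (Fin.cons x d : Fin (m + 1) → A) (Fin.cons x d') :=
  ReflTransGen.lift (fun d : Fin m → A => (Fin.cons x d : Fin (m + 1) → A)) (fun _ _ => cons x)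
    _ _ h

theorem exists_reflTransGen_of_map (f : A →+ B) {b : Fin m → A} {c : Fin m → B}
    (h : ReflTransGen TupleMove (f ∘ b) c) : ∃ b', ReflTransGen TupleMove b b' ∧ f ∘ b' = c := by
  induction h with
  | refl => exact ⟨b, .refl, rfl⟩
  | tail _ hmove ih =>
    obtain ⟨b', hbb', rfl⟩ := ih
    obtain ⟨b'', hmove', rfl⟩ := exists_of_map f hmove
    exact ⟨b'', hbb'.tail hmove', rfl⟩

theorem reflTransGen_update_add {b : Fin m → A} {i : Fin m} {y : A}
    (hy : y ∈ AddSubgroup.closure (b '' {i}ᶜ)) :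
    ReflTransGen TupleMove b (update b i (b i + y)) := by
  suffices ∀ v, ReflTransGen TupleMove (update b i v) (update b i (v + y)) by
    simpa using this (b i)
  induction hy using AddSubgroup.closure_induction'' with
  | mem z hz =>
    obtain ⟨j, hji, rfl⟩ := hz
    intro v
    simpa [update_of_ne hji] using ReflTransGen.single (add (update b i v) (Ne.symm hji))
  | neg_mem z hz =>
    obtain ⟨j, hji, rfl⟩ := hz
    intro v
    simpa [update_of_ne hji, ← sub_eq_add_neg] using
      ReflTransGen.single (sub (update b i v) (Ne.symm hji))
  | zero => exact fun _ => by simpa using .refl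
  | add y z _ _ hy hz => exact fun v => (hy v).trans (by simpa [add_assoc] using hz (v + y))

theorem reflTransGen_cons_of_closure_eq_top (φ : A →+ ℤ) {x y : A} {d : Fin m → A}
    (hx : φ x = 1) (hy : φ y = 1) (hd : ∀ i, φ (d i) = 0)
    (htop : AddSubgroup.closure (range (Fin.cons x d : Fin (m + 1) → A)) = ⊤) :
    ReflTransGen TupleMove (Fin.cons x d : Fin (m + 1) → A) (Fin.cons y d) := by
  rw [Fin.range_cons] at htop
  have hyx : y - x ∈ AddSubgroup.closure ((Fin.cons x d : Fin (m + 1) → A) '' {0}ᶜ) := by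
    have : (Fin.cons x d : Fin (m + 1) → A) '' {0}ᶜ = range d := by
      ext z; simp [Fin.exists_fin_succ]
    rw [this, closure_eq_ker_of_closure_insert_eq_top hx (by simpa using hd) htop]
    simp [hx, hy]
  simpa using reflTransGen_update_add hyx

theorem exists_reflTransGen_single_zero (v : Fin (m + 1) → ℤ) :
    ∃ d, ReflTransGen TupleMove v (Pi.single 0 d) := by
  by_cases h : ∃ i j, i ≠ j ∧ v j ≠ 0 ∧ (v j).natAbs ≤ (v i).natAbs
  · obtain ⟨i, j, hij, hj, hle⟩ := h
    obtain ⟨w, hmove, hw⟩ : ∃ w, TupleMove v (update v i w) ∧ w.natAbs < (v i).natAbs := by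
      rcases lt_or_ge (v i + v j).natAbs (v i).natAbs with h | h
      · exact ⟨_, add v hij, h⟩
      · exact ⟨_, sub v hij, by omega⟩
    obtain ⟨d, hd⟩ := exists_reflTransGen_single_zero (update v i w)
    exact ⟨d, .head hmove hd⟩
  · push Not at h
    obtain ⟨k, hk⟩ : ∃ k, ∀ j, j ≠ k → v j = 0 := by
      by_cases hv : ∃ k, v k ≠ 0
      · obtain ⟨k, hk⟩ := hv
        refine ⟨k, fun j hjk => by_contra fun hj => ?_⟩
        exact (h j k hjk hk).not_gt (h k j (Ne.symm hjk) hj)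
      · push Not at hv
        exact ⟨0, fun j _ => hv j⟩
    have hv : v = Pi.single k (v k) := by
      ext j
      rcases eq_or_ne j k with rfl | hjk <;> simp [*]
    refine ⟨v k, .single ?_⟩
    convert swap v 0 k using 1
    rw [hv]
    ext j
    simp [Pi.single_apply, Equiv.swap_apply_eq_iff]
termination_by ∑ i, (v i).natAbs
decreasing_by
  refine Finset.sum_lt_sum (fun r _ => ?_) ⟨i, Finset.mem_univ _, by simpa using hw⟩
  rcases eq_or_ne r i with rfl | hr <;> simp [*, hw.le]

theorem reflTransGen_single_zero_one (v : Fin (m + 1) → ℤ)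
    (hv : AddSubgroup.closure (range v) = ⊤) : ReflTransGen TupleMove v (Pi.single 0 1) := by
  obtain ⟨d, hd⟩ := exists_reflTransGen_single_zero v
  have hd_unit : d = 1 ∨ d = -1 := by
    have h1 : (1 : ℤ) ∈ AddSubgroup.closure (range (Pi.single 0 d : Fin (m + 1) → ℤ)) := by
      rw [closure_range_eq_of_reflTransGen hd, hv]; exact AddSubgroup.mem_top 1
    have hle : AddSubgroup.closure (range (Pi.single 0 d : Fin (m + 1) → ℤ)) ≤
        AddSubgroup.zmultiples d := by
      refine (AddSubgroup.closure_le _).2 (range_subset_iff.2 fun j => ?_)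
      rcases eq_or_ne j 0 with rfl | hj <;> simp [*]
    obtain ⟨c, hc⟩ := AddSubgroup.mem_zmultiples_iff.1 (hle h1)
    exact Int.eq_one_or_neg_one_of_mul_eq_one (by simpa [mul_comm] using hc)
  rcases hd_unit with rfl | rfl
  · exact hd
  · refine hd.tail ?_
    convert neg (Pi.single 0 (-1) : Fin (m + 1) → ℤ) 0 using 1
    simp [Pi.single, update_idem]

end TupleMove

def padZero {n : ℕ} (a : Fin n → A) (m : ℕ) : Fin m → A :=
  fun j => if h : (j : ℕ) < n then a ⟨j, h⟩ else 0

section padZero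

variable {n : ℕ} (a : Fin n → A)

@[simp]
theorem padZero_castLE (h : n ≤ m) (i : Fin n) : padZero a m (Fin.castLE h i) = a i := by
  simp [padZero]

theorem padZero_of_le {j : Fin m} (hj : n ≤ j) : padZero a m j = 0 :=
  dif_neg hj.not_gt

theorem comp_padZero (f : A →+ B) : f ∘ padZero a m = padZero (f ∘ a) m := by
  ext j
  simp only [padZero, comp_apply]
  split_ifs <;> simp

theorem padZero_succ (a : Fin (n + 1) → A) :
    padZero a (m + 1) = Fin.cons (a 0) (padZero (Fin.tail a) m) := by
  ext j
  cases j using Fin.cases <;> simp [padZero, Fin.tail]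

end padZero

def Fin.consZeroHom (n : ℕ) : (Fin n → A) →+ (Fin (n + 1) → A) where
  toFun y := Fin.cons 0 y
  map_zero' := by ext j; cases j using Fin.cases <;> simp
  map_add' y z := by ext j; cases j using Fin.cases <;> simp

@[simp]
theorem Fin.consZeroHom_apply {n : ℕ} (y : Fin n → A) : Fin.consZeroHom n y = Fin.cons 0 y := rfl

theorem Fin.consZeroHom_injective (n : ℕ) : Injective (Fin.consZeroHom (A := A) n) :=
  fun _ _ h => Fin.cons_right_injective (α := fun _ => A) 0 h

theorem Fin.consZeroHom_comp_single (n : ℕ) (x : A) :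
    Fin.consZeroHom n ∘ (fun i : Fin n => Pi.single i x) =
      Fin.tail (fun i : Fin (n + 1) => (Pi.single i x : Fin (n + 1) → A)) := by
  ext i j
  cases j using Fin.cases <;> simp [Fin.tail, Pi.single_apply]

end

theorem closure_range_eq_top_of_cons {n m : ℕ} {x : Fin (n + 1) → ℤ} (hx : x 0 = 1)
    {c : Fin m → Fin n → ℤ}
    (htop : AddSubgroup.closure (range (Fin.cons x (Fin.consZeroHom n ∘ c))) = ⊤) :
    AddSubgroup.closure (range c) = ⊤ := by
  let φ : (Fin (n + 1) → ℤ) →+ ℤ := Pi.evalAddMonoidHom _ 0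
  rw [Fin.range_cons] at htop
  have hker := closure_eq_ker_of_closure_insert_eq_top (φ := φ) hx
    (by rintro _ ⟨i, rfl⟩; simp [φ]) htop
  rw [range_comp, ← AddMonoidHom.map_closure] at hker
  refine (AddSubgroup.eq_top_iff' _).2 fun z => ?_
  rw [← AddSubgroup.mem_map_iff_mem (Fin.consZeroHom_injective n), hker]
  simp [φ]

open TupleMove in
theorem reflTransGen_padZero_single :
    ∀ {n m : ℕ} (b : Fin m → Fin n → ℤ), AddSubgroup.closure (range b) = ⊤ →
      ReflTransGen TupleMove b (padZero (fun i => Pi.single i 1) m)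
  | 0, _, b, _ | _ + 1, 0, b, _ => by rw [Subsingleton.elim b (padZero _ _)]
  | n + 1, m + 1, b, hb => by
    let φ : (Fin (n + 1) → ℤ) →+ ℤ := Pi.evalAddMonoidHom _ 0
    obtain ⟨b₁, hbb₁, hφb₁⟩ := exists_reflTransGen_of_map φ <|
      reflTransGen_single_zero_one _ <| closure_range_comp_eq_top (fun k => ⟨fun _ => k, rfl⟩) hb
    have hb₁0 : φ (b₁ 0) = 1 := congrFun hφb₁ 0
    let c : Fin m → Fin n → ℤ := fun i => Fin.tail (b₁ i.succ)
    have hb₁ : b₁ = Fin.cons (b₁ 0) (Fin.consZeroHom n ∘ c) := by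
      ext j : 1
      cases j using Fin.cases with
      | zero => rfl
      | succ i =>
        have : b₁ i.succ 0 = 0 := by simpa [φ] using congrFun hφb₁ i.succ
        simp [c, ← this, Fin.cons_self_tail]
    have htop : AddSubgroup.closure (range b₁) = ⊤ :=
      (closure_range_eq_of_reflTransGen hbb₁).trans hb
    have hc : AddSubgroup.closure (range c) = ⊤ :=
      closure_range_eq_top_of_cons hb₁0 (hb₁ ▸ htop)
    have h₂ := reflTransGen_cons (b₁ 0)
      (reflTransGen_map (Fin.consZeroHom n) (reflTransGen_padZero_single c hc))
    rw [comp_padZero, Fin.consZeroHom_comp_single, ← hb₁] at h₂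
    rw [padZero_succ]
    refine hbb₁.trans (h₂.trans (reflTransGen_cons_of_closure_eq_top φ hb₁0 (by simp [φ]) ?_ ?_))
    · intro i
      simp only [padZero]
      split_ifs <;> simp [φ, Fin.tail]
    · exact (closure_range_eq_of_reflTransGen h₂).trans htop

/-- If `A` is free abelian of rank `n` with basis `a` and `b₁, …, b_m` generate `A`,
then a finite sequence of swaps, negations and additions transforms `(b₁, …, b_m)` into
a tuple whose first `n` entries are the basis and whose remaining entries vanish. -/
theorem stmt_13 {n m : ℕ} {A : Type*} [AddCommGroup A]
    (a : Module.Basis (Fin n) ℤ A) (b : Fin m → A)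
    (hb : AddSubgroup.closure (Set.range b) = ⊤) :
    ∃ (hmn : n ≤ m) (b' : Fin m → A),
      Relation.ReflTransGen TupleMove b b' ∧
      (∀ i : Fin n, b' (Fin.castLE hmn i) = a i) ∧
      (∀ j : Fin m, n ≤ (j : ℕ) → b' j = 0) := by
  have hmn : n ≤ m := by
    have hspan : Submodule.span ℤ (range b) = ⊤ := by
      rw [← Submodule.toAddSubgroup_inj, Submodule.span_int_eq_addSubgroupClosure, hb]
      exact Submodule.top_toAddSubgroup.symm
    simpa [Module.finrank_eq_card_basis a] using finrank_le_of_span_eq_top hspan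
  let E : A ≃+ (Fin n → ℤ) := a.equivFun.toAddEquiv
  have h := TupleMove.reflTransGen_map E.symm.toAddMonoidHom <| reflTransGen_padZero_single _ <|
    closure_range_comp_eq_top (f := E.toAddMonoidHom) E.surjective hb
  have e1 : ⇑E.symm.toAddMonoidHom ∘ (E.toAddMonoidHom ∘ b) = b := by ext; simp
  have e2 : ⇑E.symm.toAddMonoidHom ∘ (fun i : Fin n => (Pi.single i 1 : Fin n → ℤ)) = a := by
    ext; simp [E]
  rw [comp_padZero, e1, e2] at h
  exact ⟨hmn, padZero a m, h, padZero_castLE a hmn, fun j => padZero_of_le a⟩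
end
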